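/- Let a, b, c : [0,1] → ℝ be continuous with a(t) > 0, and suppose for each t the quantities satisfy 1 − b(t) > 0 and (1 − b(t))² − 4 a(t) c(t) > 0. Let x : [0,1] → ℝ be continuous, nonnegative, with x(t) ≤ c(t) + b(t) x(t) + a(t) x(t)² for all t, and x(0) ≤ (1 − b(0) − √((1−b(0))² − 4a(0)c(0)))/(2a(0)). Then x(t) ≤ (1 − b(t) − √((1−b(t))² − 4a(t)c(t)))/(2a(t)) for all t ∈ [0,1]. -/
import Mathlib

lemma dichot_aux (A B C X : ℝ) (hA : 0 < A) (hB : 0 < 1 - B)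
    (hD : 0 < (1 - B) ^ 2 - 4 * A * C)
    (hineq : X ≤ C + B * X + A * X ^ 2) :
    X ≤ (1 - B - Real.sqrt ((1 - B) ^ 2 - 4 * A * C)) / (2 * A) ∨
      (1 - B + Real.sqrt ((1 - B) ^ 2 - 4 * A * C)) / (2 * A) ≤ X := by
  set s := Real.sqrt ((1 - B) ^ 2 - 4 * A * C) with hs
  have hs2 : s ^ 2 = (1 - B) ^ 2 - 4 * A * C := Real.sq_sqrt hD.le
  have hspos : 0 < s := Real.sqrt_pos.mpr hD
  rcases le_or_gt X ((1 - B - s) / (2 * A)) with h | h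
  · exact Or.inl h
  · right
    rw [div_le_iff₀ (by positivity)]
    have h' : 1 - B - s < X * (2 * A) := (div_lt_iff₀ (by positivity)).mp h
    nlinarith [sq_nonneg (X * (2 * A) - (1 - B) - s), sq_nonneg (X * (2 * A) - (1 - B) + s)]

/-- Continuity-method connectedness argument: a continuous nonnegative quantity `x(t)`
satisfying the quadratic inequality `x ≤ c + b x + a x²` on `[0,1]`, starting below the
smaller root at `t = 0`, stays below the smaller root for all `t ∈ [0,1]`. -/
theorem stmt_2 (a b c x : ℝ → ℝ)
    (ha : ContinuousOn a (Set.Icc 0 1)) (hb : ContinuousOn b (Set.Icc 0 1))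
    (hc : ContinuousOn c (Set.Icc 0 1)) (hxcont : ContinuousOn x (Set.Icc 0 1))
    (hapos : ∀ t ∈ Set.Icc (0:ℝ) 1, 0 < a t)
    (h1 : ∀ t ∈ Set.Icc (0:ℝ) 1, 0 < 1 - b t)
    (h2 : ∀ t ∈ Set.Icc (0:ℝ) 1, 0 < (1 - b t) ^ 2 - 4 * a t * c t)
    (hx0 : ∀ t ∈ Set.Icc (0:ℝ) 1, 0 ≤ x t)
    (hineq : ∀ t ∈ Set.Icc (0:ℝ) 1, x t ≤ c t + b t * x t + a t * x t ^ 2)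
    (hinit : x 0 ≤ (1 - b 0 - Real.sqrt ((1 - b 0) ^ 2 - 4 * a 0 * c 0)) / (2 * a 0)) :
    ∀ t ∈ Set.Icc (0:ℝ) 1,
      x t ≤ (1 - b t - Real.sqrt ((1 - b t) ^ 2 - 4 * a t * c t)) / (2 * a t) := by
  set I := Set.Icc (0:ℝ) 1 with hI
  set r : ℝ → ℝ := fun t => (1 - b t - Real.sqrt ((1 - b t) ^ 2 - 4 * a t * c t)) / (2 * a t)
    with hrdef
  set R : ℝ → ℝ := fun t => (1 - b t + Real.sqrt ((1 - b t) ^ 2 - 4 * a t * c t)) / (2 * a t)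
    with hRdef
  have hsq : ContinuousOn (fun t => Real.sqrt ((1 - b t) ^ 2 - 4 * a t * c t)) I :=
    Real.continuous_sqrt.comp_continuousOn
      (((continuousOn_const.sub hb).pow 2).sub ((continuousOn_const.mul ha).mul hc))
  have hden : ∀ t ∈ I, 2 * a t ≠ 0 := fun t ht => by have := hapos t ht; positivity
  have hr : ContinuousOn r I :=
    ((continuousOn_const.sub hb).sub hsq).div (continuousOn_const.mul ha) hden
  have hR : ContinuousOn R I :=
    ((continuousOn_const.sub hb).add hsq).div (continuousOn_const.mul ha) hden
  have hdich : ∀ t ∈ I, x t ≤ r t ∨ R t ≤ x t := fun t ht =>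
    dichot_aux (a t) (b t) (c t) (x t) (hapos t ht) (h1 t ht) (h2 t ht) (hineq t ht)
  have hrR : ∀ t ∈ I, r t < R t := fun t ht => by
    have hs : 0 < Real.sqrt ((1 - b t) ^ 2 - 4 * a t * c t) := Real.sqrt_pos.mpr (h2 t ht)
    have h2a : (0:ℝ) < 2 * a t := by have := hapos t ht; positivity
    exact div_lt_div_of_pos_right (by linarith) h2a
  haveI : PreconnectedSpace I := Subtype.preconnectedSpace isPreconnected_Icc
  set S : Set I := {t : I | x t ≤ r t} with hSdef
  have hSclosed : IsClosed S :=
    isClosed_le (continuousOn_iff_continuous_restrict.mp hxcont)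
      (continuousOn_iff_continuous_restrict.mp hr)
  have hScompl : Sᶜ = {t : I | R t ≤ x t} := by
    ext t
    simp only [hSdef, Set.mem_compl_iff, Set.mem_setOf_eq, not_le]
    constructor
    · intro h
      rcases hdich t t.2 with h' | h'
      · exact absurd h' (not_le.mpr h)
      · exact h'
    · intro h
      exact lt_of_lt_of_le (hrR t t.2) h
  have hSopen : IsOpen S := by
    rw [← compl_compl S]
    apply isOpen_compl_iff.mpr
    rw [hScompl]
    exact isClosed_le (continuousOn_iff_continuous_restrict.mp hR)
      (continuousOn_iff_continuous_restrict.mp hxcont)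
  have h0 : (0:ℝ) ∈ I := by constructor <;> norm_num
  have hSne : S.Nonempty := ⟨⟨0, h0⟩, hinit⟩
  have hSuniv : S = Set.univ := by
    rcases isClopen_iff.mp ⟨hSclosed, hSopen⟩ with h | h
    · exact absurd (h ▸ hSne) (by simp)
    · exact h
  intro t ht
  have : (⟨t, ht⟩ : I) ∈ S := hSuniv ▸ Set.mem_univ _
  exact this
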